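/- (Vanishing property, part a) Assume the complex numbers a_j are pairwise distinct with a_1 = 0. Let μ, λ be strict partitions with μ ⊄ λ (the shifted diagram of μ is not contained in that of λ). Define x(λ)_i = a_{λ_i + 1} for 1 ≤ i ≤ ℓ(λ). Then P_{μ;a}(x(λ)) = 0, i.e., evaluating the multiparameter Schur P-function at the point (a_{λ_1+1},…,a_{λ_{ℓ(λ)}+1}, 0, 0, …) gives zero. -/

import Mathlib

noncomputable section

abbrev K (n : ℕ) : Type := FractionRing (MvPolynomial (Fin n) ℂ)

def Xv {n : ℕ} (i : Fin n) : K n :=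
  algebraMap (MvPolynomial (Fin n) ℂ) (K n) (MvPolynomial.X i)

def Cv {n : ℕ} (c : ℂ) : K n :=
  algebraMap (MvPolynomial (Fin n) ℂ) (K n) (MvPolynomial.C c)

/-- The product over pairs `i < j` with `i < l` of `(x i + x j)/(x i - x j)`. -/
def ratioProd {n : ℕ} (l : ℕ) (x : Fin n → K n) : K n :=
  ∏ p ∈ Finset.univ.filter (fun p : Fin n × Fin n => (p.1 : ℕ) < l ∧ p.1 < p.2),
    (x p.1 + x p.2) / (x p.1 - x p.2)

/-- A strict partition: strictly decreasing positive parts `parts 0 > parts 1 > ⋯`,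
indexed from `0`, with `parts i = 0` for `i ≥ l`. -/
structure SPartition where
  l : ℕ
  parts : ℕ → ℕ
  strict : ∀ i, i + 1 < l → parts (i + 1) < parts i
  pos : ∀ i, i < l → 0 < parts i
  zero : ∀ i, l ≤ i → parts i = 0

def SPartition.size (lam : SPartition) : ℕ := ∑ i ∈ Finset.range lam.l, lam.parts i

/-- The multiparameter Schur P-polynomial `P_{λ;a|n}`, as an element of the field of
rational functions in `n` variables (by convention `0` if `n < ℓ(λ)`). -/
def Pmulti (lam : SPartition) (a : ℕ → ℂ) (n : ℕ) : K n :=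
  if hl : lam.l ≤ n then
    Cv (((n - lam.l).factorial : ℂ))⁻¹ *
      ∑ ω : Equiv.Perm (Fin n),
        (∏ i : Fin lam.l,
            ∏ k ∈ Finset.range (lam.parts i.1),
              (Xv (ω (Fin.castLE hl i)) - Cv (a (k + 1)))) *
          ratioProd lam.l (fun j => Xv (ω j))
  else 0


/-- The evaluation point `x(λ) = (a_{λ_1+1}, …, a_{λ_{ℓ(λ)}+1}, 0, 0, …)` in `n`
variables. -/
def xpt (lam : SPartition) (a : ℕ → ℂ) (n : ℕ) : Fin n → ℂ :=
  fun i => if (i : ℕ) < lam.l then a (lam.parts (i : ℕ) + 1) else 0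

/-!
Clearing the denominators `x_i - x_j` shows that a polynomial representative of `P_{μ;a|n}` can
be evaluated at any point with distinct coordinates by evaluating the defining sum termwise.
Setting the last variable to `0` then kills the terms in which `0` lands among the first `ℓ(μ)`
positions (they contain the factor `0 - a_1`) and leaves `n + 1 - ℓ(μ)` copies of the sum for
`P_{μ;a|n}`: this is stability. Hence it suffices to evaluate with `ℓ(λ)` variables, where the
coordinates of `x(λ)` are distinct. There every term contains a factor
`x_{ω(i)} - a_{λ_{ω(i)} + 1} = 0`, since by pigeonhole `μ ⊄ λ` rules out `μ_i ≤ λ_{ω(i)}` for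
all `i`.
-/

open MvPolynomial Finset

namespace SPartition

variable (P : SPartition)

theorem antitone_parts : Antitone P.parts :=
  antitone_nat_of_succ_le fun i => by
    by_cases h : i + 1 < P.l
    · exact (P.strict i h).le
    · simp [P.zero (i + 1) (by omega)]

theorem lt_l_of_parts_pos {i : ℕ} (h : 0 < P.parts i) : i < P.l := by
  by_contra hc
  simp [P.zero i (by omega)] at h

theorem strictAntiOn_parts : StrictAntiOn P.parts (Set.Iio P.l) := fun i _ j hj hij =>
  (P.antitone_parts (Nat.succ_le_of_lt hij)).trans_lt (P.strict i (by simp at hj; omega))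

theorem parts_succAbove {n : ℕ} {j : Fin (n + 1)} (hj : P.l ≤ j) (i : Fin n) :
    P.parts (j.succAbove i) = P.parts i := by
  rcases lt_or_ge i.castSucc j with h | h
  · rw [Fin.succAbove_of_castSucc_lt _ _ h, Fin.val_castSucc]
  · have hi : P.l ≤ i := hj.trans (by simpa [Fin.le_def] using h)
    rw [Fin.succAbove_of_le_castSucc _ _ h, Fin.val_succ, P.zero _ (by omega), P.zero _ hi]

/-- Otherwise `ω` would map the rows `0, …, i₀` injectively into the rows `0, …, i₀ - 1`. -/
theorem exists_parts_perm_lt_of_not_le {mu lam : SPartition} (h : ∃ i, lam.parts i < mu.parts i)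
    {n : ℕ} (hm : mu.l ≤ n) (ω : Equiv.Perm (Fin n)) :
    ∃ i : Fin n, lam.parts (ω i) < mu.parts i := by
  obtain ⟨i₀, hi₀⟩ := h
  have hi₀n : i₀ < n := (mu.lt_l_of_parts_pos (by omega)).trans_le hm
  by_contra! hle
  obtain ⟨I, rfl⟩ : ∃ I : Fin n, (I : ℕ) = i₀ := ⟨⟨i₀, hi₀n⟩, rfl⟩
  have hmaps : Set.MapsTo ω (Iic I) (Iio I) := by
    intro i hi
    simp only [coe_Iic, coe_Iio, Set.mem_Iic, Set.mem_Iio, Fin.le_def, Fin.lt_def] at hi ⊢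
    by_contra! hge
    have := lam.antitone_parts hge
    have := mu.antitone_parts hi
    have := hle i
    omega
  have := card_le_card_of_injOn ω hmaps ω.injective.injOn
  simp at this

end SPartition

def ratioPairs (l n : ℕ) : Finset (Fin n × Fin n) :=
  univ.filter fun p : Fin n × Fin n => (p.1 : ℕ) < l ∧ p.1 < p.2

/-- `ratioProd` over an arbitrary field. -/
def pairRatio {F : Type*} [Field F] (l : ℕ) {n : ℕ} (y : Fin n → F) : F :=
  ∏ q ∈ ratioPairs l n, (y q.1 + y q.2) / (y q.1 - y q.2)

def factorialProd {R : Type*} [CommRing R] [Algebra ℂ R] (mu : SPartition) (a : ℕ → ℂ) {n : ℕ}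
    (y : Fin n → R) : R :=
  ∏ i : Fin n, ∏ k ∈ range (mu.parts i), (y i - algebraMap ℂ R (a (k + 1)))

def Pterm {F : Type*} [Field F] [Algebra ℂ F] (mu : SPartition) (a : ℕ → ℂ) {n : ℕ}
    (y : Fin n → F) : F :=
  factorialProd mu a y * pairRatio mu.l y

def PmultiAt {F : Type*} [Field F] [Algebra ℂ F] (mu : SPartition) (a : ℕ → ℂ) {n : ℕ}
    (x : Fin n → F) : F :=
  if mu.l ≤ n then ((n - mu.l).factorial : F)⁻¹ * ∑ ω : Equiv.Perm (Fin n), Pterm mu a (x ∘ ω)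
  else 0

theorem Pmulti_eq_PmultiAt (mu : SPartition) (a : ℕ → ℂ) (n : ℕ) :
    Pmulti mu a n = PmultiAt mu a (Xv : Fin n → K n) := by
  have hCv (c : ℂ) : (Cv c : K n) = algebraMap ℂ (K n) c :=
    (IsScalarTower.algebraMap_apply ℂ (MvPolynomial (Fin n) ℂ) (K n) c).symm
  unfold Pmulti PmultiAt
  split_ifs with hl
  · simp only [hCv, map_inv₀, map_natCast]
    congr 1
    refine sum_congr rfl fun ω _ => congrArg (· * _) ?_
    refine Fintype.prod_of_injective _ (Fin.castLE_injective hl) _ _ (fun i hrange => ?_)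
      fun i => rfl
    have hi : mu.l ≤ i := by
      by_contra! h
      exact hrange ⟨⟨i, h⟩, rfl⟩
    rw [mu.zero i hi, range_zero, prod_empty]
  · rfl

section Clearing

variable {n : ℕ}

def discr (n : ℕ) : MvPolynomial (Fin n) ℂ := ∏ q ∈ (univ : Finset (Fin n)).offDiag, (X q.1 - X q.2)

def permPairs (l : ℕ) (ω : Equiv.Perm (Fin n)) : Finset (Fin n × Fin n) :=
  (ratioPairs l n).map (ω.prodCongr ω).toEmbedding

/-- `Pterm mu a (X ∘ ω)` with its denominators cleared by `discr n`. -/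
def PtermNum (mu : SPartition) (a : ℕ → ℂ) (ω : Equiv.Perm (Fin n)) : MvPolynomial (Fin n) ℂ :=
  factorialProd mu a (X ∘ ω) * (∏ q ∈ ratioPairs mu.l n, (X (ω q.1) + X (ω q.2))) *
    ∏ q ∈ univ.offDiag \ permPairs mu.l ω, (X q.1 - X q.2)

def PmultiNum (mu : SPartition) (a : ℕ → ℂ) (n : ℕ) : MvPolynomial (Fin n) ℂ :=
  if mu.l ≤ n then C ((n - mu.l).factorial : ℂ)⁻¹ * ∑ ω : Equiv.Perm (Fin n), PtermNum mu a ω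
  else 0

theorem permPairs_subset_offDiag (l : ℕ) (ω : Equiv.Perm (Fin n)) :
    permPairs l ω ⊆ univ.offDiag := by
  intro q hq
  simp only [permPairs, ratioPairs, mem_map, mem_filter, mem_univ, true_and] at hq
  obtain ⟨q', ⟨-, hlt⟩, rfl⟩ := hq
  simpa using hlt.ne

variable {R : Type*} [CommRing R] [Algebra ℂ R] {F : Type*} [Field F] [Algebra ℂ F]

theorem map_factorialProd {S : Type*} [CommRing S] [Algebra ℂ S] (φ : R →ₐ[ℂ] S)
    (mu : SPartition) (a : ℕ → ℂ) (y : Fin n → R) :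
    φ (factorialProd mu a y) = factorialProd mu a (φ ∘ y) := by
  simp [factorialProd]

theorem aeval_discr_ne_zero {x : Fin n → F} (hx : Function.Injective x) :
    aeval x (discr n) ≠ 0 := by
  simp only [discr, map_prod, map_sub, aeval_X]
  exact prod_ne_zero_iff.2 fun q hq => sub_ne_zero.2 (hx.ne (mem_offDiag.1 hq).2.2)

theorem pairRatio_mul_aeval_discr {x : Fin n → F} (hx : Function.Injective x) (l : ℕ)
    (ω : Equiv.Perm (Fin n)) :
    pairRatio l (x ∘ ω) * aeval x (discr n) =
      (∏ q ∈ ratioPairs l n, (x (ω q.1) + x (ω q.2))) *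
        ∏ q ∈ univ.offDiag \ permPairs l ω, (x q.1 - x q.2) := by
  have hne : ∀ q ∈ ratioPairs l n, x (ω q.1) - x (ω q.2) ≠ 0 := fun q hq =>
    sub_ne_zero.2 ((hx.comp ω.injective).ne (by simp [ratioPairs] at hq; exact hq.2.ne))
  have hsplit : aeval x (discr n) = (∏ q ∈ ratioPairs l n, (x (ω q.1) - x (ω q.2))) *
      ∏ q ∈ univ.offDiag \ permPairs l ω, (x q.1 - x q.2) := by
    simp only [discr, map_prod, map_sub, aeval_X]
    rw [← prod_sdiff (permPairs_subset_offDiag l ω), mul_comm, permPairs, prod_map]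
    rfl
  rw [hsplit, ← mul_assoc, pairRatio, ← prod_mul_distrib]
  congr 1
  exact prod_congr rfl fun q hq => div_mul_cancel₀ _ (hne q hq)

theorem Pterm_mul_aeval_discr {x : Fin n → F} (hx : Function.Injective x) (mu : SPartition)
    (a : ℕ → ℂ) (ω : Equiv.Perm (Fin n)) :
    Pterm mu a (x ∘ ω) * aeval x (discr n) = aeval x (PtermNum mu a ω) := by
  rw [Pterm, mul_assoc, pairRatio_mul_aeval_discr hx, PtermNum, map_mul, map_mul,
    map_factorialProd, ← mul_assoc]
  simp [map_prod, Function.comp_def]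

theorem PmultiAt_mul_aeval_discr {x : Fin n → F} (hx : Function.Injective x)
    (mu : SPartition) (a : ℕ → ℂ) :
    PmultiAt mu a x * aeval x (discr n) = aeval x (PmultiNum mu a n) := by
  unfold PmultiAt PmultiNum
  split_ifs
  · simp [mul_assoc, sum_mul, Pterm_mul_aeval_discr hx, map_sum]
  · simp

theorem Xv_injective (n : ℕ) : Function.Injective (Xv : Fin n → K n) :=
  (IsFractionRing.injective (MvPolynomial (Fin n) ℂ) (K n)).comp (X_injective (R := ℂ))

theorem aeval_Xv (q : MvPolynomial (Fin n) ℂ) :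
    aeval (Xv : Fin n → K n) q = algebraMap (MvPolynomial (Fin n) ℂ) (K n) q := by
  have : aeval (Xv : Fin n → K n) = IsScalarTower.toAlgHom ℂ (MvPolynomial (Fin n) ℂ) (K n) := by
    ext i
    simp [Xv]
  rw [this]
  rfl

theorem aeval_eq_PmultiAt {mu : SPartition} {a : ℕ → ℂ} {p : MvPolynomial (Fin n) ℂ}
    (hp : algebraMap (MvPolynomial (Fin n) ℂ) (K n) p = Pmulti mu a n)
    {x : Fin n → F} (hx : Function.Injective x) :
    aeval x p = PmultiAt mu a x := by
  have hcleared : p * discr n = PmultiNum mu a n := by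
    apply IsFractionRing.injective (MvPolynomial (Fin n) ℂ) (K n)
    rw [map_mul, hp, Pmulti_eq_PmultiAt, ← aeval_Xv, ← aeval_Xv,
      PmultiAt_mul_aeval_discr (Xv_injective n)]
  have := congrArg (aeval x) hcleared
  rw [map_mul, ← PmultiAt_mul_aeval_discr hx] at this
  exact mul_right_cancel₀ (aeval_discr_ne_zero hx) this

end Clearing

theorem Fin.val_succAbove_lt_iff {l n : ℕ} {j : Fin (n + 1)} (hj : l ≤ j) (i : Fin n) :
    (j.succAbove i : ℕ) < l ↔ (i : ℕ) < l := by
  rcases lt_or_ge i.castSucc j with h | h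
  · rw [Fin.succAbove_of_castSucc_lt _ _ h, Fin.val_castSucc]
  · have : (j : ℕ) ≤ i := by simpa [Fin.le_def] using h
    rw [Fin.succAbove_of_le_castSucc _ _ h, Fin.val_succ]
    omega

section Stability

variable {n : ℕ}

def insertPerm (j : Fin (n + 1)) (σ : Equiv.Perm (Fin n)) : Equiv.Perm (Fin (n + 1)) :=
  ((finSuccEquiv' j).trans (Equiv.optionCongr σ)).trans (finSuccEquiv' (Fin.last n)).symm

@[simp]
theorem insertPerm_apply_self (j : Fin (n + 1)) (σ : Equiv.Perm (Fin n)) :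
    insertPerm j σ j = Fin.last n := by
  simp [insertPerm]

@[simp]
theorem insertPerm_apply_succAbove (j : Fin (n + 1)) (σ : Equiv.Perm (Fin n)) (t : Fin n) :
    insertPerm j σ (j.succAbove t) = (σ t).castSucc := by
  simp [insertPerm, Fin.succAbove_last]

theorem bijective_insertPerm :
    Function.Bijective fun p : Fin (n + 1) × Equiv.Perm (Fin n) => insertPerm p.1 p.2 := by
  rw [Fintype.bijective_iff_injective_and_card]
  refine ⟨?_, by simp [Fintype.card_perm, Nat.factorial_succ]⟩
  rintro ⟨j, σ⟩ ⟨j', σ'⟩ h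
  simp only at h
  obtain rfl : j = j' := by
    by_contra hne
    obtain ⟨t, rfl⟩ := Fin.exists_succAbove_eq (Ne.symm hne)
    have := insertPerm_apply_succAbove j σ t
    rw [h, insertPerm_apply_self] at this
    exact (Fin.castSucc_lt_last (σ t)).ne' this
  obtain rfl : σ = σ' := Equiv.ext fun t => Fin.castSucc_injective n <| by
    rw [← insertPerm_apply_succAbove j σ, h, insertPerm_apply_succAbove]
  rfl

theorem sum_perm_succ {M : Type*} [AddCommMonoid M] (f : Equiv.Perm (Fin (n + 1)) → M) :
    ∑ ω, f ω = ∑ j, ∑ σ : Equiv.Perm (Fin n), f (insertPerm j σ) := by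
  rw [← Fintype.sum_prod_type']
  exact (Fintype.sum_bijective _ bijective_insertPerm _ _ fun _ => rfl).symm

theorem snoc_comp_insertPerm {α : Type*} (x : Fin n → α) (c : α) (j : Fin (n + 1))
    (σ : Equiv.Perm (Fin n)) :
    Fin.snoc x c ∘ insertPerm j σ = Fin.insertNth j c (x ∘ σ) := by
  funext i
  induction i using j.succAboveCases <;> simp

variable {R : Type*} [CommRing R] [Algebra ℂ R] {F : Type*} [Field F] (mu : SPartition)
  {a : ℕ → ℂ}

theorem factorialProd_insertNth_zero_of_lt (ha : a 1 = 0) {j : Fin (n + 1)} (hj : (j : ℕ) < mu.l)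
    (z : Fin n → R) : factorialProd mu a (Fin.insertNth j 0 z) = 0 :=
  prod_eq_zero (mem_univ j) (prod_eq_zero (mem_range.2 (mu.pos j hj)) (by simp [ha]))

theorem factorialProd_insertNth {j : Fin (n + 1)} (hj : mu.l ≤ j) (c : R) (z : Fin n → R) :
    factorialProd mu a (Fin.insertNth j c z) = factorialProd mu a z := by
  rw [factorialProd, Fin.prod_univ_succAbove _ j, mu.zero j hj, range_zero, prod_empty, one_mul]
  simp [mu.parts_succAbove hj, factorialProd]

theorem pairRatio_eq_prod_prod (l : ℕ) (y : Fin n → F) :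
    pairRatio l y =
      ∏ i : Fin n, ∏ k : Fin n, if (i : ℕ) < l ∧ i < k then (y i + y k) / (y i - y k) else 1 := by
  rw [pairRatio, ratioPairs, prod_filter, ← Fintype.prod_prod_type']

/-- A zero coordinate inserted after the first `l` ones only contributes factors
`(z i + 0) / (z i - 0) = 1`. -/
theorem pairRatio_insertNth_zero {l : ℕ} {j : Fin (n + 1)} (hj : l ≤ j) {z : Fin n → F}
    (hz : ∀ i, z i ≠ 0) : pairRatio l (Fin.insertNth j 0 z) = pairRatio l z := by
  rw [pairRatio_eq_prod_prod, pairRatio_eq_prod_prod, Fin.prod_univ_succAbove _ j]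
  simp only [not_lt.2 hj, false_and, if_false, prod_const_one, one_mul]
  refine prod_congr rfl fun i _ => ?_
  rw [Fin.prod_univ_succAbove _ j]
  simp [div_self (hz i), Fin.val_succAbove_lt_iff hj, Fin.succAbove_lt_succAbove_iff]

theorem sum_Pterm_snoc_zero [Algebra ℂ F] (ha : a 1 = 0) {x : Fin n → F} (hx : ∀ i, x i ≠ 0) :
    ∑ ω : Equiv.Perm (Fin (n + 1)), Pterm mu a (Fin.snoc x 0 ∘ ω) =
      (n + 1 - mu.l) • ∑ σ : Equiv.Perm (Fin n), Pterm mu a (x ∘ σ) := by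
  have hcol (j : Fin (n + 1)) : ∑ σ : Equiv.Perm (Fin n), Pterm mu a (Fin.insertNth j 0 (x ∘ σ)) =
      if (j : ℕ) < mu.l then 0 else ∑ σ : Equiv.Perm (Fin n), Pterm mu a (x ∘ σ) := by
    split_ifs with hj
    · simp [Pterm, factorialProd_insertNth_zero_of_lt mu ha hj]
    · refine sum_congr rfl fun σ _ => ?_
      rw [Pterm, Pterm, factorialProd_insertNth mu (not_lt.1 hj),
        pairRatio_insertNth_zero (z := x ∘ σ) (not_lt.1 hj) fun i => hx (σ i)]
  simp only [sum_perm_succ, snoc_comp_insertPerm, hcol, sum_ite, sum_const_zero, zero_add,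
    sum_const]
  congr 1
  have := card_filter_add_card_filter_not (s := univ) fun j : Fin (n + 1) => (j : ℕ) < mu.l
  rw [Fin.card_filter_val_lt, card_univ, Fintype.card_fin] at this
  omega

theorem PmultiAt_snoc_zero [Algebra ℂ F] (ha : a 1 = 0) {x : Fin n → F} (hx : ∀ i, x i ≠ 0) :
    PmultiAt mu a (Fin.snoc x 0) = PmultiAt mu a x := by
  unfold PmultiAt
  rw [sum_Pterm_snoc_zero mu ha hx]
  split_ifs with h₁ h₂ h₂
  · have := charZero_of_injective_algebraMap (algebraMap ℂ F).injective
    rw [show n + 1 - mu.l = n - mu.l + 1 by omega, Nat.factorial_succ, nsmul_eq_mul]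
    have hm : ((n - mu.l : ℕ) : F) + 1 ≠ 0 := by exact_mod_cast (n - mu.l).succ_ne_zero
    push_cast
    field_simp
  · simp [show n + 1 - mu.l = 0 by omega]
  · omega
  · rfl

end Stability

theorem Xv_ne_zero {n : ℕ} (i : Fin n) : (Xv i : K n) ≠ 0 :=
  (map_ne_zero_iff _ (IsFractionRing.injective (MvPolynomial (Fin n) ℂ) (K n))).2 (X_ne_zero i)

theorem aeval_aeval_snoc_X_zero {S : Type*} [CommRing S] [Algebra ℂ S] {n : ℕ} (y : Fin n → S)
    (p : MvPolynomial (Fin (n + 1)) ℂ) :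
    aeval y (aeval (Fin.snoc X 0 : Fin (n + 1) → MvPolynomial (Fin n) ℂ) p) =
      aeval (Fin.snoc y 0) p := by
  rw [comp_aeval_apply, ← Function.comp_def, Fin.comp_snoc]
  simp [Function.comp_def]

theorem algebraMap_aeval_snoc_X_zero {mu : SPartition} {a : ℕ → ℂ} (ha : a 1 = 0) {n : ℕ}
    {p : MvPolynomial (Fin (n + 1)) ℂ}
    (hp : algebraMap (MvPolynomial (Fin (n + 1)) ℂ) (K (n + 1)) p = Pmulti mu a (n + 1)) :
    algebraMap (MvPolynomial (Fin n) ℂ) (K n) (aeval (Fin.snoc X 0) p) = Pmulti mu a n := by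
  have hinj : Function.Injective (Fin.snoc (Xv : Fin n → K n) 0) :=
    Fin.snoc_injective_iff.2 ⟨Xv_injective n, fun ⟨i, hi⟩ => Xv_ne_zero i hi⟩
  rw [← aeval_Xv, aeval_aeval_snoc_X_zero, aeval_eq_PmultiAt hp hinj,
    PmultiAt_snoc_zero mu ha Xv_ne_zero, Pmulti_eq_PmultiAt]

theorem xpt_succ (lam : SPartition) (a : ℕ → ℂ) {n : ℕ} (hl : lam.l ≤ n) :
    xpt lam a (n + 1) = Fin.snoc (xpt lam a n) 0 := by
  funext i
  induction i using Fin.lastCases with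
  | last => simp [xpt, hl]
  | cast i => simp [xpt]

theorem xpt_injective {a : ℕ → ℂ} (hinj : ∀ i j : ℕ, 0 < i → 0 < j → a i = a j → i = j)
    (lam : SPartition) : Function.Injective (xpt lam a lam.l) := by
  intro i j h
  simp only [xpt, i.isLt, j.isLt, if_true] at h
  have := hinj _ _ (Nat.succ_pos _) (Nat.succ_pos _) h
  exact Fin.ext (lam.strictAntiOn_parts.injOn i.isLt j.isLt (by omega))

theorem PmultiAt_xpt_eq_zero {a : ℕ → ℂ} {mu lam : SPartition}
    (hns : ∃ i, lam.parts i < mu.parts i) : PmultiAt mu a (xpt lam a lam.l) = 0 := by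
  unfold PmultiAt
  split_ifs with hm
  · refine mul_eq_zero_of_right _ (sum_eq_zero fun ω _ => mul_eq_zero_of_left ?_ _)
    obtain ⟨i, hi⟩ := SPartition.exists_parts_perm_lt_of_not_le hns hm ω
    refine prod_eq_zero (mem_univ i) (prod_eq_zero (mem_range.2 hi) ?_)
    simp [xpt]
  · rfl

theorem Pmulti_vanishing_general
    (a : ℕ → ℂ) (ha : a 1 = 0)
    (hinj : ∀ i j : ℕ, 0 < i → 0 < j → a i = a j → i = j)
    (mu lam : SPartition) (hns : ¬ ∀ i, mu.parts i ≤ lam.parts i)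
    (n : ℕ) (hl : lam.l ≤ n)
    (p : MvPolynomial (Fin n) ℂ)
    (hp : algebraMap (MvPolynomial (Fin n) ℂ) (K n) p = Pmulti mu a n) :
    MvPolynomial.eval (xpt lam a n) p = 0 := by
  push Not at hns
  induction n, hl using Nat.le_induction with
  | base =>
    change aeval (xpt lam a lam.l) p = 0
    rw [aeval_eq_PmultiAt hp (xpt_injective hinj lam), PmultiAt_xpt_eq_zero hns]
  | succ n hl ih =>
    rw [xpt_succ lam a hl]
    change aeval _ p = 0
    rw [← aeval_aeval_snoc_X_zero]
    exact ih _ (algebraMap_aeval_snoc_X_zero ha hp)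

/-- Vanishing property (part a): if the `a_j` (`j ≥ 1`) are pairwise distinct,
`a_1 = 0`, and the shifted diagram of `μ` is not contained in that of `λ`, then
`P_{μ;a}(x(λ)) = 0`.  (Evaluation is performed on a polynomial representative of the
rational function `P_{μ;a|n}`.) -/
theorem Pmulti_vanishing
    (a : ℕ → ℂ) (ha : a 1 = 0)
    (hinj : ∀ i j : ℕ, 0 < i → 0 < j → a i = a j → i = j)
    (mu lam : SPartition) (hns : ¬ ∀ i, mu.parts i ≤ lam.parts i)
    (n : ℕ) (hm : mu.l ≤ n) (hl : lam.l ≤ n)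
    (p : MvPolynomial (Fin n) ℂ)
    (hp : algebraMap (MvPolynomial (Fin n) ℂ) (K n) p = Pmulti mu a n) :
    MvPolynomial.eval (xpt lam a n) p = 0 :=
  Pmulti_vanishing_general a ha hinj mu lam hns n hl p hp

end
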